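/- Correctness of the dynamic-programming recurrence for the SIPP: define F(i,j,k), for integers i,j ≥ 1 and k ≥ 0, as the minimum of H(A) over all i×j RC layouts A with W(A) ≤ k (F(i,j,k) = +∞ if no such layout exists), with the conventions F(i,j,k) = +∞ whenever i ≤ 0 or j ≤ 0 or k < l_1. Then F(1,1,k) = l_1 for all k ≥ l_1, and for all i,j with i+j ≥ 3 and all k, F(i,j,k) = min{ F(i−1,j,k) + l_{ij−j+1}, F(i,j−1, k − l_{ij−i+1}) }. -/

import Mathlib

/-- A `p × q` layout: a matrix whose entries are exactly the integers `1, …, p*q`. -/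
def IsLayout (p q : ℕ) (A : Fin p → Fin q → ℕ) : Prop :=
  Function.Injective (fun ij : Fin p × Fin q => A ij.1 ij.2) ∧
  (Set.range fun ij : Fin p × Fin q => A ij.1 ij.2) = Set.Icc 1 (p * q)

/-- Width of a layout with respect to side lengths `l`. -/
def layW (l : ℕ → ℕ) {p q : ℕ} (A : Fin p → Fin q → ℕ) : ℕ :=
  ∑ j : Fin q, Finset.univ.sup fun i : Fin p => l (A i j)

/-- Height of a layout with respect to side lengths `l`. -/
def layH (l : ℕ → ℕ) {p q : ℕ} (A : Fin p → Fin q → ℕ) : ℕ :=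
  ∑ i : Fin p, Finset.univ.sup fun j : Fin q => l (A i j)

/-- RC layouts: obtainable from the 1×1 base layout by add-row and add-column operations. -/
inductive IsRC : {p q : ℕ} → (Fin p → Fin q → ℕ) → Prop
  | base : IsRC (fun (_ : Fin 1) (_ : Fin 1) => 1)
  | addRow {p q : ℕ} {A : Fin p → Fin q → ℕ} (h : IsRC A) :
      IsRC (fun (i : Fin (p + 1)) (j : Fin q) =>
        if hi : (i : ℕ) < p then A ⟨i, hi⟩ j else p * q + (j : ℕ) + 1)
  | addCol {p q : ℕ} {A : Fin p → Fin q → ℕ} (h : IsRC A) :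
      IsRC (fun (i : Fin p) (j : Fin (q + 1)) =>
        if hj : (j : ℕ) < q then A i ⟨j, hj⟩ else p * q + (i : ℕ) + 1)

/-- `F(i,j,k)`: the minimum height of an `i × j` RC layout of width at most `k`
(`⊤` if no such layout exists). -/
noncomputable def Fdp (l : ℕ → ℕ) (i j k : ℕ) : ℕ∞ :=
  sInf {h : ℕ∞ | ∃ A : Fin i → Fin j → ℕ, IsRC A ∧ layW l A ≤ k ∧ h = (layH l A : ℕ∞)}

/-! An RC layout with `i + j ≥ 3` is obtained from a smaller RC layout by its last operation,
so minimizing the height splits along that operation. The appended entries exceed all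
earlier ones and `l` is nonincreasing, so an appended row leaves every column maximum
(attained in the first row) unchanged and adds `l (p * q + 1)` to the height; an appended
column does the same with width and height exchanged. -/

open Function

variable {p q : ℕ}

def appendRow (A : Fin p → Fin q → ℕ) : Fin (p + 1) → Fin q → ℕ :=
  fun i j => if hi : (i : ℕ) < p then A ⟨i, hi⟩ j else p * q + (j : ℕ) + 1

def appendCol (A : Fin p → Fin q → ℕ) : Fin p → Fin (q + 1) → ℕ :=
  fun i j => if hj : (j : ℕ) < q then A i ⟨j, hj⟩ else p * q + (i : ℕ) + 1

@[simp]
lemma appendRow_castSucc (A : Fin p → Fin q → ℕ) (i : Fin p) (j : Fin q) :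
    appendRow A i.castSucc j = A i j := by
  simp [appendRow]

@[simp]
lemma appendRow_last (A : Fin p → Fin q → ℕ) (j : Fin q) :
    appendRow A (Fin.last p) j = p * q + (j : ℕ) + 1 := by
  simp [appendRow]

lemma appendCol_eq_swap_appendRow_swap (A : Fin p → Fin q → ℕ) :
    appendCol A = swap (appendRow (swap A)) := by
  funext i j
  simp [appendCol, appendRow, swap, mul_comm]

lemma layW_swap (l : ℕ → ℕ) (A : Fin p → Fin q → ℕ) : layW l (swap A) = layH l A := rfl

lemma layH_swap (l : ℕ → ℕ) (A : Fin p → Fin q → ℕ) : layH l (swap A) = layW l A := rfl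

namespace IsRC

variable {A : Fin p → Fin q → ℕ}

lemma pos (h : IsRC A) : 0 < p ∧ 0 < q := by
  induction h <;> omega

lemma apply_mem_Icc (h : IsRC A) (i : Fin p) (j : Fin q) : A i j ∈ Set.Icc 1 (p * q) := by
  induction h with
  | base => simp
  | @addRow p q A _ ih =>
    have hj := j.isLt
    have hpq : (p + 1) * q = p * q + q := Nat.succ_mul p q
    by_cases hi : (i : ℕ) < p
    · have := ih ⟨i, hi⟩ j
      simp only [Set.mem_Icc, hi, dite_true] at this ⊢
      constructor <;> nlinarith
    · simp only [Set.mem_Icc, hi, dite_false]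
      omega
  | @addCol p q A _ ih =>
    have hi := i.isLt
    have hpq : p * (q + 1) = p * q + p := Nat.mul_succ p q
    by_cases hj : (j : ℕ) < q
    · have := ih i ⟨j, hj⟩
      simp only [Set.mem_Icc, hj, dite_true] at this ⊢
      constructor <;> nlinarith
    · simp only [Set.mem_Icc, hj, dite_false]
      omega

lemma apply_zero_zero (h : IsRC A) : A ⟨0, h.pos.1⟩ ⟨0, h.pos.2⟩ = 1 := by
  induction h with
  | base => rfl
  | addRow h ih => simpa [h.pos.1] using ih
  | addCol h ih => simpa [h.pos.2] using ih

lemma eq_appendRow_or_eq_appendCol {A : Fin (p + 1) → Fin (q + 1) → ℕ} (h : IsRC A)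
    (hpq : p + q ≠ 0) :
    (∃ B : Fin p → Fin (q + 1) → ℕ, IsRC B ∧ A = appendRow B) ∨
      ∃ B : Fin (p + 1) → Fin q → ℕ, IsRC B ∧ A = appendCol B := by
  cases h with
  | base => omega
  | addRow hB => exact .inl ⟨_, hB, rfl⟩
  | addCol hB => exact .inr ⟨_, hB, rfl⟩

end IsRC

section Antitone

variable {l : ℕ → ℕ} (hl : AntitoneOn l (Set.Ici 1)) {A : Fin p → Fin q → ℕ}
include hl

lemma layW_appendRow (hp : 0 < p) (hA : ∀ i j, A i j ∈ Set.Icc 1 (p * q)) :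
    layW l (appendRow A) = layW l A := by
  refine Finset.sum_congr rfl fun j _ => le_antisymm (Finset.sup_le fun i _ => ?_) ?_
  · induction i using Fin.lastCases with
    | cast i => simpa using Finset.le_sup (f := fun i => l (A i j)) (Finset.mem_univ i)
    | last =>
      obtain ⟨h1, h2⟩ := hA ⟨0, hp⟩ j
      calc l (appendRow A (Fin.last p) j) ≤ l (A ⟨0, hp⟩ j) := by
            rw [appendRow_last]; exact hl h1 (by simp) (by omega)
        _ ≤ _ := Finset.le_sup (f := fun i => l (A i j)) (Finset.mem_univ _)
  · exact Finset.sup_le fun i _ => by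
      simpa using Finset.le_sup (f := fun i => l (appendRow A i j)) (Finset.mem_univ i.castSucc)

lemma layH_appendRow (hq : 0 < q) : layH l (appendRow A) = layH l A + l (p * q + 1) := by
  rw [layH, Fin.sum_univ_castSucc]
  simp only [appendRow_castSucc, appendRow_last]
  congr 1
  refine le_antisymm (Finset.sup_le fun j _ => hl (by simp) (by simp) (by omega)) ?_
  simpa using Finset.le_sup (f := fun j : Fin q => l (p * q + (j : ℕ) + 1))
    (Finset.mem_univ ⟨0, hq⟩)

lemma layW_appendCol (hp : 0 < p) : layW l (appendCol A) = layW l A + l (p * q + 1) := by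
  rw [appendCol_eq_swap_appendRow_swap, layW_swap, layH_appendRow hl hp, layH_swap, mul_comm]

lemma layH_appendCol (hq : 0 < q) (hA : ∀ i j, A i j ∈ Set.Icc 1 (p * q)) :
    layH l (appendCol A) = layH l A := by
  rw [appendCol_eq_swap_appendRow_swap, layH_swap, layW_appendRow hl hq, layW_swap]
  simpa [mul_comm] using fun j i => hA i j

end Antitone

lemma IsRC.one_le_layW (l : ℕ → ℕ) {A : Fin p → Fin q → ℕ} (h : IsRC A) : l 1 ≤ layW l A := by
  obtain ⟨hp, hq⟩ := h.pos
  calc l 1 = l (A ⟨0, hp⟩ ⟨0, hq⟩) := by rw [h.apply_zero_zero]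
    _ ≤ Finset.univ.sup fun i => l (A i ⟨0, hq⟩) :=
      Finset.le_sup (f := fun i => l (A i ⟨0, hq⟩)) (Finset.mem_univ _)
    _ ≤ layW l A := Finset.single_le_sum (f := fun j => Finset.univ.sup fun i => l (A i j))
      (fun _ _ => Nat.zero_le _) (Finset.mem_univ _)

section Fdp

variable {l : ℕ → ℕ} {k : ℕ}

lemma Fdp_le {A : Fin p → Fin q → ℕ} (hA : IsRC A) (hW : layW l A ≤ k) :
    Fdp l p q k ≤ layH l A :=
  sInf_le ⟨A, hA, hW, rfl⟩

lemma le_Fdp {h : ℕ∞} (H : ∀ A : Fin p → Fin q → ℕ, IsRC A → layW l A ≤ k → h ≤ layH l A) :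
    h ≤ Fdp l p q k :=
  le_sInf fun _ ⟨A, hA, hW, he⟩ => he ▸ H A hA hW

lemma Fdp_eq_top_of_lt (hk : k < l 1) : Fdp l p q k = ⊤ :=
  top_le_iff.mp <| le_Fdp fun A hA hW => absurd ((hA.one_le_layW l).trans hW) (by omega)

lemma Fdp_zero_left : Fdp l 0 q k = ⊤ :=
  top_le_iff.mp <| le_Fdp fun _ hA _ => absurd hA.pos.1 (lt_irrefl 0)

lemma Fdp_zero_right : Fdp l p 0 k = ⊤ :=
  top_le_iff.mp <| le_Fdp fun _ hA _ => absurd hA.pos.2 (lt_irrefl 0)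

lemma Fdp_one_one (hk : l 1 ≤ k) : Fdp l 1 1 k = l 1 := by
  refine le_antisymm ((Fdp_le .base (by simpa [layW] using hk)).trans_eq (by simp [layH]))
    (le_Fdp fun A hA _ => ?_)
  have hA1 : A 0 0 = 1 := hA.apply_zero_zero
  simp [layH, hA1]

variable (hl : AntitoneOn l (Set.Ici 1))
include hl

lemma Fdp_succ_left_le : Fdp l (p + 1) q k ≤ Fdp l p q k + l (p * q + 1) := by
  conv_rhs => rw [Fdp, ENat.sInf_add]
  refine le_iInf₂ ?_
  rintro _ ⟨B, hB, hW, rfl⟩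
  have hW' : layW l (appendRow B) ≤ k := by rwa [layW_appendRow hl hB.pos.1 hB.apply_mem_Icc]
  calc Fdp l (p + 1) q k ≤ layH l (appendRow B) := Fdp_le hB.addRow hW'
    _ = _ := by rw [layH_appendRow hl hB.pos.2]; push_cast; rfl

lemma Fdp_succ_right_le (hk : l (p * q + 1) ≤ k) :
    Fdp l p (q + 1) k ≤ Fdp l p q (k - l (p * q + 1)) :=
  le_Fdp fun B hB hW => by
    have hW' : layW l (appendCol B) ≤ k := by rw [layW_appendCol hl hB.pos.1]; omega
    exact (Fdp_le (A := appendCol B) hB.addCol hW').trans_eq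
      (by rw [layH_appendCol hl hB.pos.2 hB.apply_mem_Icc])

lemma Fdp_succ_succ (hpq : p + q ≠ 0) :
    Fdp l (p + 1) (q + 1) k =
      min (Fdp l p (q + 1) k + l (p * (q + 1) + 1))
        (if l ((p + 1) * q + 1) ≤ k then Fdp l (p + 1) q (k - l ((p + 1) * q + 1)) else ⊤) := by
  refine le_antisymm (le_min (Fdp_succ_left_le hl) ?_) (le_Fdp fun A hA hW => ?_)
  · split_ifs with hk
    exacts [Fdp_succ_right_le hl hk, le_top]
  rcases hA.eq_appendRow_or_eq_appendCol hpq with ⟨B, hB, rfl⟩ | ⟨B, hB, rfl⟩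
  · rw [layW_appendRow hl hB.pos.1 hB.apply_mem_Icc] at hW
    calc _ ≤ Fdp l p (q + 1) k + l (p * (q + 1) + 1) := min_le_left _ _
      _ ≤ layH l B + l (p * (q + 1) + 1) := add_le_add_left (Fdp_le hB hW) _
      _ = layH l (appendRow B) := by rw [layH_appendRow hl hB.pos.2]; push_cast; rfl
  · rw [layW_appendCol hl hB.pos.1] at hW
    rw [if_pos (by omega), layH_appendCol hl hB.pos.2 hB.apply_mem_Icc]
    exact (min_le_right _ _).trans (Fdp_le hB (by omega))

end Fdp

theorem sipp_dp_recurrence_general (l : ℕ → ℕ)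
    (hl : ∀ a b, 1 ≤ a → a ≤ b → l b ≤ l a) :
    (∀ i j k, (i = 0 ∨ j = 0 ∨ k < l 1) → Fdp l i j k = ⊤) ∧
    (∀ k, l 1 ≤ k → Fdp l 1 1 k = (l 1 : ℕ∞)) ∧
    (∀ i j k, 1 ≤ i → 1 ≤ j → 3 ≤ i + j →
      Fdp l i j k =
        min (Fdp l (i - 1) j k + (l (i * j - j + 1) : ℕ∞))
          (if l (i * j - i + 1) ≤ k then Fdp l i (j - 1) (k - l (i * j - i + 1)) else ⊤)) := by
  refine ⟨fun i j k hdeg => ?_, fun k => Fdp_one_one, fun i j k hi hj hij => ?_⟩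
  · rcases hdeg with rfl | rfl | hk
    exacts [Fdp_zero_left, Fdp_zero_right, Fdp_eq_top_of_lt hk]
  obtain ⟨p, rfl⟩ : ∃ p, i = p + 1 := ⟨i - 1, by omega⟩
  obtain ⟨q, rfl⟩ : ∃ q, j = q + 1 := ⟨j - 1, by omega⟩
  have hrow : (p + 1) * (q + 1) - (q + 1) + 1 = p * (q + 1) + 1 := by
    rw [Nat.succ_mul, Nat.add_sub_cancel]
  have hcol : (p + 1) * (q + 1) - (p + 1) + 1 = (p + 1) * q + 1 := by
    rw [Nat.mul_succ, Nat.add_sub_cancel]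
  rw [hrow, hcol, Nat.add_sub_cancel, Nat.add_sub_cancel]
  exact Fdp_succ_succ (fun a ha b _ hab => hl a b ha hab) (by omega)

/-- Correctness of the dynamic-programming recurrence for the SIPP:
`F(i,j,k) = ⊤` when `i = 0`, `j = 0` or `k < l 1`; `F(1,1,k) = l 1` for `k ≥ l 1`; and for
`i, j ≥ 1` with `i + j ≥ 3`,
`F(i,j,k) = min (F(i-1,j,k) + l_{ij-j+1}) (F(i,j-1,k - l_{ij-i+1}))`, the second term being
`⊤` when `l_{ij-i+1} > k`. -/
theorem sipp_dp_recurrence (l : ℕ → ℕ)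
    (hl : ∀ a b, 1 ≤ a → a ≤ b → l b ≤ l a) (hpos : 0 < l 1) :
    (∀ i j k, (i = 0 ∨ j = 0 ∨ k < l 1) → Fdp l i j k = ⊤) ∧
    (∀ k, l 1 ≤ k → Fdp l 1 1 k = (l 1 : ℕ∞)) ∧
    (∀ i j k, 1 ≤ i → 1 ≤ j → 3 ≤ i + j →
      Fdp l i j k =
        min (Fdp l (i - 1) j k + (l (i * j - j + 1) : ℕ∞))
          (if l (i * j - i + 1) ≤ k then Fdp l i (j - 1) (k - l (i * j - i + 1)) else ⊤)) :=
  sipp_dp_recurrence_general l hl
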